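/- arXiv:2001.03249 — 5 statements merged into one kernel-verified Lean document; each statement's English description precedes it below -/
import Mathlib

section
/- Let p > 1 be a real number and let x₁, x₂, y₁, y₂ be real numbers such that (x₂ − x₁)(y₂ − y₁) > 0. Then |x₁ − y₂|^p + |x₂ − y₁|^p > |x₁ − y₁|^p + |x₂ − y₂|^p. That is, for the weight w(x,y) = |x − y|^p with p > 1, the 'crossed' matching of the pairs of points costs strictly more than the 'parallel' matching whenever the two pairs have the same orientation. -/
/-!
Put `u = x₁ - y₂`, `s = x₁ - y₁`, `t = x₂ - y₂`, `v = x₂ - y₁` (after swapping indices if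
necessary). The orientation hypothesis says exactly that `s` and `t` lie strictly between `u`
and `v`, and `s + t = u + v`. For a strictly convex function `f`, moving two points apart while
keeping their sum fixed increases `f s + f t`, and `x ↦ |x| ^ p` is strictly convex for `p > 1`.
-/

open Set

theorem Real.strictConvexOn_abs_rpow {p : ℝ} (hp : 1 < p) :
    StrictConvexOn ℝ univ fun x : ℝ ↦ |x| ^ p := by
  refine ⟨convex_univ, fun x _ y _ hxy a b ha hb hab ↦ ?_⟩
  simp only [smul_eq_mul]
  have hp₀ : 0 < p := zero_lt_one.trans hp
  have htri : |a * x + b * y| ≤ a * |x| + b * |y| := by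
    simpa [abs_mul, abs_of_pos ha, abs_of_pos hb] using abs_add_le (a * x) (b * y)
  have hmem (z : ℝ) : |z| ∈ Ici (0 : ℝ) := abs_nonneg z
  rcases eq_or_ne |x| |y| with habs | habs
  · -- as `x = -y ≠ 0`, strictness comes from the triangle inequality, not from `t ↦ t ^ p`
    have hyx : x = -y := (abs_eq_abs.1 habs).resolve_left hxy
    have hy : y ≠ 0 := by rintro rfl; simp_all
    have hstrict : |a * x + b * y| < a * |x| + b * |y| := by
      rw [hyx, abs_neg, ← add_mul, hab, one_mul, show a * -y + b * y = (b - a) * y by ring,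
        abs_mul]
      exact mul_lt_of_lt_one_left (abs_pos.2 hy) (abs_lt.2 ⟨by linarith, by linarith⟩)
    calc |a * x + b * y| ^ p < (a * |x| + b * |y|) ^ p :=
          Real.rpow_lt_rpow (abs_nonneg _) hstrict hp₀
      _ ≤ a * |x| ^ p + b * |y| ^ p := by
          simpa using (convexOn_rpow hp.le).2 (hmem x) (hmem y) ha.le hb.le hab
  · calc |a * x + b * y| ^ p ≤ (a * |x| + b * |y|) ^ p :=
          Real.rpow_le_rpow (abs_nonneg _) htri hp₀.le
      _ < a * |x| ^ p + b * |y| ^ p := by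
          simpa using (strictConvexOn_rpow hp).2 (hmem x) (hmem y) habs ha hb hab

theorem StrictConvexOn.map_add_map_lt_of_add_eq {𝕜 β : Type*} [Field 𝕜] [LinearOrder 𝕜]
    [IsStrictOrderedRing 𝕜] [AddCommGroup β] [PartialOrder β] [IsOrderedAddMonoid β]
    [Module 𝕜 β] [PosSMulStrictMono 𝕜 β] {S : Set 𝕜} {f : 𝕜 → β} (hf : StrictConvexOn 𝕜 S f)
    {u v s t : 𝕜} (hu : u ∈ S) (hv : v ∈ S) (hus : u < s) (hsv : s < v)
    (hsum : s + t = u + v) :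
    f s + f t < f u + f v := by
  have hvu : 0 < v - u := sub_pos.2 (hus.trans hsv)
  -- `s` and `t` are the convex combinations of `u, v` with swapped weights `l, 1 - l`
  set l := (v - s) / (v - u)
  have hl : 0 < l := div_pos (sub_pos.2 hsv) hvu
  have hl' : 0 < 1 - l := sub_pos.2 ((div_lt_one hvu).2 (by linarith))
  have hs : l • u + (1 - l) • v = s := by
    simp only [smul_eq_mul, l]; field_simp; ring
  have ht : (1 - l) • u + l • v = t := by
    simp only [smul_eq_mul] at hs ⊢; linear_combination -hs - hsum
  have H₁ := hf.2 hu hv (hus.trans hsv).ne hl hl' (add_sub_cancel l 1)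
  have H₂ := hf.2 hu hv (hus.trans hsv).ne hl' hl (sub_add_cancel 1 l)
  rw [hs] at H₁
  rw [ht] at H₂
  calc f s + f t < (l • f u + (1 - l) • f v) + ((1 - l) • f u + l • f v) := add_lt_add H₁ H₂
    _ = f u + f v := by module

/-- For the weight `w(x,y) = |x-y|^p` with `p > 1`, the crossed matching of two pairs of
points on the line costs strictly more than the parallel matching whenever the two pairs
have the same orientation. -/
theorem stmt_3 (p x₁ x₂ y₁ y₂ : ℝ) (hp : 1 < p) (h : (x₂ - x₁) * (y₂ - y₁) > 0) :
    |x₁ - y₁| ^ p + |x₂ - y₂| ^ p < |x₁ - y₂| ^ p + |x₂ - y₁| ^ p := by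
  have hf := Real.strictConvexOn_abs_rpow hp
  rcases mul_pos_iff.1 h with ⟨hx, hy⟩ | ⟨hx, hy⟩
  · exact hf.map_add_map_lt_of_add_eq (mem_univ _) (mem_univ _)
      (by linarith) (by linarith) (by ring)
  · rw [add_comm (|x₁ - y₂| ^ p)]
    exact hf.map_add_map_lt_of_add_eq (mem_univ _) (mem_univ _)
      (by linarith) (by linarith) (by ring)
end

section
/- Let p > 1 be a real number, let N ≥ 3, and let r : {1,…,N} → ℝ be nondecreasing (r₁ ≤ r₂ ≤ ⋯ ≤ r_N). For a permutation σ of {1,…,N}, define the Hamiltonian-cycle cost E(σ) = Σ_{i=1}^{N} |r_{σ(i+1)} − r_{σ(i)}|^p, where indices are taken cyclically (σ(N+1) := σ(1)). Then for every permutation σ, E(σ) ≥ |r₂ − r₁|^p + |r_N − r_{N−1}|^p + Σ_{i=1}^{N−2} |r_{i+2} − r_i|^p; that is, the cycle that joins the two leftmost points, the two rightmost points, and otherwise joins each point to its second neighbor is an optimal traveling-salesman tour on the complete graph with weights |r_i − r_j|^p. -/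
/-!
Let `g j = f (R (j + 1) - R j)` be the cost of the `j`-th gap and
`e t = f (R (t + 2) - R t) - g t - g (t + 1) ≥ 0` the excess paid for skipping the point `t + 1`.
The second-neighbour cycle costs exactly `2 ∑ g j + ∑ e t`. By convexity of `f`, the increments
of `f` grow along a monotone sequence, so an edge from `a` to `b` costs at least
`∑_{a ≤ j < b} g j + ∑_{a ≤ t < b - 1} e t`. A Hamiltonian cycle crosses every gap at least twice
and jumps over every interior point at least once, so summing over its edges gives the bound.
-/

open Finset Function

theorem ConvexOn.map_add_sub_map_le_map_add_sub_map {s : Set ℝ} {f : ℝ → ℝ}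
    (hf : ConvexOn ℝ s f) {x y h : ℝ} (hx : x ∈ s) (hyh : y + h ∈ s) (hxy : x ≤ y)
    (hh : 0 ≤ h) : f (x + h) - f x ≤ f (y + h) - f y := by
  rcases (add_nonneg (sub_nonneg.2 hxy) hh).eq_or_lt with hd | hd
  · obtain ⟨rfl, rfl⟩ : y = x ∧ h = 0 := by constructor <;> linarith
    rfl
  -- `x + h` and `y` are the two points of `[x, y + h]` with mirrored barycentric weights
  set a := (y - x) / (y - x + h)
  set b := h / (y - x + h)
  have hab : a + b = 1 := by simp only [a, b]; field_simp
  have h₁ := hf.2 hx hyh (by positivity : 0 ≤ a) (by positivity : 0 ≤ b) hab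
  have h₂ := hf.2 hx hyh (by positivity : 0 ≤ b) (by positivity : 0 ≤ a) (by rwa [add_comm])
  have e₁ : a • x + b • (y + h) = x + h := by simp only [a, b, smul_eq_mul]; field_simp; ring
  have e₂ : b • x + a • (y + h) = y := by simp only [a, b, smul_eq_mul]; field_simp; ring
  rw [e₁, smul_eq_mul, smul_eq_mul] at h₁
  rw [e₂, smul_eq_mul, smul_eq_mul] at h₂
  linear_combination h₁ + h₂ + (f x + f (y + h)) * hab

theorem Finset.nsmul_sum_le_sum_sum_of_le_card {ι κ M : Type*} [Fintype ι] [DecidableEq κ]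
    [AddCommMonoid M] [PartialOrder M] [IsOrderedAddMonoid M]
    (S : Finset κ) (T : ι → Finset κ) {F : κ → M} (hF : ∀ j, 0 ≤ F j) {c : ℕ}
    (hc : ∀ j ∈ S, c ≤ #{i | j ∈ T i}) :
    c • ∑ j ∈ S, F j ≤ ∑ i, ∑ j ∈ T i, F j :=
  calc c • ∑ j ∈ S, F j
      ≤ ∑ j ∈ S, #{i | j ∈ T i} • F j := by
        rw [← sum_nsmul]; exact sum_le_sum fun j hj => nsmul_le_nsmul_left (hF j) (hc j hj)
    _ = ∑ i, ∑ j ∈ S with j ∈ T i, F j := by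
        simp only [← sum_const]
        exact sum_comm' fun j i => by simp [and_comm]
    _ ≤ ∑ i, ∑ j ∈ T i, F j :=
        sum_le_sum fun i _ => sum_le_sum_of_subset_of_nonneg (fun j hj => (mem_filter.1 hj).2)
          fun j _ _ => hF j

open Fin.NatCast in
theorem Fin.exists_and_not_add_one {N : ℕ} [NeZero N] {P : Fin N → Prop} {a b : Fin N}
    (ha : P a) (hb : ¬ P b) : ∃ i, P i ∧ ¬ P (i + 1) := by
  by_contra! hclosed
  have hall : ∀ k : ℕ, P (a + k) := by
    intro k
    induction k with
    | zero => simpa using ha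
    | succ k ih => simpa [add_assoc] using hclosed _ ih
  exact hb (by simpa using hall (b - a).val)

section CyclicTour

variable {N : ℕ} [NeZero N] {u : Fin N → ℕ}

theorem two_le_card_edge_crossing {a b : Fin N} {j : ℕ} (ha : u a ≤ j) (hb : j < u b) :
    2 ≤ #{i | j ∈ Ico (min (u i) (u (i + 1))) (max (u i) (u (i + 1)))} := by
  obtain ⟨i, hi, hi'⟩ := Fin.exists_and_not_add_one (P := fun i => u i ≤ j) ha hb.not_ge
  obtain ⟨k, hk, hk'⟩ := Fin.exists_and_not_add_one (P := fun i => ¬ u i ≤ j) hb.not_ge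
    (not_not.2 ha)
  refine one_lt_card.2 ⟨i, ?_, k, ?_, fun hik => hk (hik ▸ hi)⟩ <;>
    simp only [mem_filter, mem_univ, mem_Ico, true_and] at * <;> omega

theorem one_le_card_edge_jump (hu : Injective u) {a b : Fin N} {t : ℕ} (ha : u a ≤ t)
    (hb : t + 2 ≤ u b) :
    1 ≤ #{i | t ∈ Ico (min (u i) (u (i + 1))) (max (u i) (u (i + 1)) - 1)} := by
  refine card_pos.2 (filter_nonempty_iff.2 ?_)
  by_contra! hnone
  simp only [mem_univ, mem_Ico, forall_const] at hnone
  -- if no edge jumps over `t + 1`, an edge leaving `{u ≤ t + 1}` upwards and one leaving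
  -- `{u > t}` downwards both start at the vertex `t + 1`
  obtain ⟨i, hi, hi'⟩ := Fin.exists_and_not_add_one (P := fun i => u i ≤ t + 1)
    (by omega : u a ≤ t + 1) (by omega : ¬ u b ≤ t + 1)
  obtain ⟨k, hk, hk'⟩ := Fin.exists_and_not_add_one (P := fun i => ¬ u i ≤ t)
    (by omega : ¬ u b ≤ t) (not_not.2 ha)
  have hi₁ := hnone i
  have hk₁ := hnone k
  obtain rfl : i = k := hu (by omega)
  omega

end CyclicTour

section Cost

variable (f : ℝ → ℝ) (R : ℕ → ℝ)

def gapCost (j : ℕ) : ℝ := f (R (j + 1) - R j)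

def skipExcess (t : ℕ) : ℝ := f (R (t + 2) - R t) - gapCost f R t - gapCost f R (t + 1)

variable {f R}

theorem gapCost_nonneg (hf : ∀ x, 0 ≤ x → 0 ≤ f x) (hR : Monotone R) (j : ℕ) :
    0 ≤ gapCost f R j :=
  hf _ (sub_nonneg.2 (hR j.le_succ))

theorem skipExcess_nonneg (hf : ConvexOn ℝ (Set.Ici 0) f) (hf0 : f 0 = 0) (hR : Monotone R)
    (t : ℕ) : 0 ≤ skipExcess f R t := by
  have h := hf.map_add_sub_map_le_map_add_sub_map (x := 0) (y := R (t + 1) - R t)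
    (h := R (t + 2) - R (t + 1)) Set.self_mem_Ici (by simpa using hR (by omega : t ≤ t + 2))
    (sub_nonneg.2 (hR t.le_succ)) (sub_nonneg.2 (hR (t + 1).le_succ))
  simp only [skipExcess, gapCost, hf0, zero_add, sub_zero, sub_add_sub_cancel'] at h ⊢
  linarith

theorem sum_gapCost_add_sum_skipExcess_le_succ (hf : ConvexOn ℝ (Set.Ici 0) f)
    (hR : Monotone R) {a b : ℕ} (hab : a ≤ b) :
    ∑ j ∈ Ico a (b + 1), gapCost f R j + ∑ t ∈ Ico a b, skipExcess f R t
      ≤ f (R (b + 1) - R a) := by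
  induction b, hab using Nat.le_induction with
  | base => simp [gapCost]
  | succ b hab ih =>
    rw [sum_Ico_succ_top (by omega : a ≤ b + 1) (gapCost f R),
      sum_Ico_succ_top hab (skipExcess f R)]
    -- appending the gap `[b + 1, b + 2]` costs more after `[a, b + 1]` than after `[b, b + 1]`
    have h := hf.map_add_sub_map_le_map_add_sub_map (x := R (b + 1) - R b)
      (y := R (b + 1) - R a) (h := R (b + 2) - R (b + 1))
      (sub_nonneg.2 (hR b.le_succ)) (by simpa using hR (by omega : a ≤ b + 2))
      (by linarith [hR hab]) (sub_nonneg.2 (hR (b + 1).le_succ))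
    simp only [skipExcess, gapCost, sub_add_sub_cancel', add_assoc, Nat.reduceAdd] at h ih ⊢
    linarith

theorem sum_gapCost_add_sum_skipExcess_le (hf : ConvexOn ℝ (Set.Ici 0) f) (hf0 : f 0 = 0)
    (hR : Monotone R) {a b : ℕ} (hab : a ≤ b) :
    ∑ j ∈ Ico a b, gapCost f R j + ∑ t ∈ Ico a (b - 1), skipExcess f R t ≤ f (R b - R a) := by
  rcases hab.eq_or_lt with rfl | hab
  · simp [hf0]
  obtain ⟨c, rfl⟩ := Nat.exists_eq_add_of_lt hab
  simpa [← add_assoc] using sum_gapCost_add_sum_skipExcess_le_succ hf hR (Nat.le_add_right a c)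

theorem gapCost_add_gapCost_add_sum_eq (n : ℕ) :
    gapCost f R 0 + gapCost f R n + ∑ t ∈ range n, f (R (t + 2) - R t)
      = 2 • ∑ j ∈ range (n + 1), gapCost f R j + ∑ t ∈ range n, skipExcess f R t := by
  rw [two_smul]
  nth_rw 1 [sum_range_succ']
  rw [sum_range_succ]
  simp only [skipExcess, sum_sub_distrib]
  ring

theorem secondNeighbor_cost_le_cycle_cost (hf : ConvexOn ℝ (Set.Ici 0) f) (hf0 : f 0 = 0)
    (hf_nonneg : ∀ x, 0 ≤ x → 0 ≤ f x) (hR : Monotone R) {n : ℕ} (σ : Equiv.Perm (Fin (n + 2))) :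
    f |R 1 - R 0| + f |R (n + 1) - R n| + ∑ t ∈ range n, f |R (t + 2) - R t|
      ≤ ∑ i, f |R (σ (i + 1)) - R (σ i)| := by
  set u : Fin (n + 2) → ℕ := fun i => σ i
  have hu : Injective u := Fin.val_injective.comp σ.injective
  have hu₀ : u (σ.symm 0) = 0 := by simp [u]
  have hu₁ : u (σ.symm (Fin.last _)) = n + 1 := by simp [u]
  have hedge : ∀ i, |R (u (i + 1)) - R (u i)|
      = R (max (u i) (u (i + 1))) - R (min (u i) (u (i + 1))) := by
    intro i; rw [hR.map_max, hR.map_min, max_sub_min_eq_abs]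
  have hcross : ∀ j ∈ range (n + 1),
      2 ≤ #{i | j ∈ Ico (min (u i) (u (i + 1))) (max (u i) (u (i + 1)))} := fun j hj =>
    two_le_card_edge_crossing (hu₀.trans_le j.zero_le) (hu₁ ▸ mem_range.1 hj)
  have hjump : ∀ t ∈ range n,
      1 ≤ #{i | t ∈ Ico (min (u i) (u (i + 1))) (max (u i) (u (i + 1)) - 1)} := fun t ht =>
    one_le_card_edge_jump hu (hu₀.trans_le t.zero_le) (by rw [hu₁]; simpa using ht)
  calc f |R 1 - R 0| + f |R (n + 1) - R n| + ∑ t ∈ range n, f |R (t + 2) - R t|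
      = 2 • ∑ j ∈ range (n + 1), gapCost f R j + 1 • ∑ t ∈ range n, skipExcess f R t := by
        have habs {a b : ℕ} (hab : a ≤ b) : |R b - R a| = R b - R a :=
          abs_of_nonneg (sub_nonneg.2 (hR hab))
        rw [one_smul, ← gapCost_add_gapCost_add_sum_eq, habs zero_le_one, habs (n.le_add_right 1),
          sum_congr rfl fun t _ => by rw [habs (t.le_add_right 2)]]
        rfl
    _ ≤ ∑ i, ∑ j ∈ Ico (min (u i) (u (i + 1))) (max (u i) (u (i + 1))), gapCost f R j
        + ∑ i, ∑ t ∈ Ico (min (u i) (u (i + 1))) (max (u i) (u (i + 1)) - 1), skipExcess f R t :=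
        add_le_add (nsmul_sum_le_sum_sum_of_le_card _ _ (gapCost_nonneg hf_nonneg hR) hcross)
          (nsmul_sum_le_sum_sum_of_le_card _ _ (skipExcess_nonneg hf hf0 hR) hjump)
    _ ≤ ∑ i, f |R (σ (i + 1)) - R (σ i)| := by
        rw [← sum_add_distrib]
        refine sum_le_sum fun i _ => ?_
        rw [hedge i]
        exact sum_gapCost_add_sum_skipExcess_le hf hf0 hR min_le_max

end Cost

/-- For `p > 1` and ordered points `r 0 ≤ r 1 ≤ ⋯ ≤ r (N-1)` on the line, the Hamiltonian
cycle joining the two leftmost points, the two rightmost points, and otherwise each point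
to its second neighbor, is an optimal traveling-salesman tour for weights `|rᵢ - rⱼ|^p`. -/
theorem stmt_4 (N : ℕ) (hN : 3 ≤ N) (p : ℝ) (hp : 1 < p)
    (r : Fin N → ℝ) (hr : Monotone r) (σ : Equiv.Perm (Fin N)) :
    |r ⟨1, by omega⟩ - r ⟨0, by omega⟩| ^ p
      + |r ⟨N - 1, by omega⟩ - r ⟨N - 2, by omega⟩| ^ p
      + ∑ i : Fin (N - 2), |r ⟨i.1 + 2, by have := i.2; omega⟩ - r ⟨i.1, by have := i.2; omega⟩| ^ p
    ≤ ∑ i : Fin N, |r (σ ⟨(i.1 + 1) % N, Nat.mod_lt _ (by omega)⟩) - r (σ i)| ^ p := by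
  obtain ⟨n, rfl⟩ : ∃ n, N = n + 2 := ⟨N - 2, by omega⟩
  set R : ℕ → ℝ := fun k => r ⟨min k (n + 1), by omega⟩
  have hR : Monotone R := fun k l hkl => hr (Fin.mk_le_mk.2 (by omega))
  have hRr (i : Fin (n + 2)) : r i = R i := by
    simp only [R]; congr; ext; exact (min_eq_left (Nat.lt_succ_iff.1 i.2)).symm
  have key := secondNeighbor_cost_le_cycle_cost (f := fun x => x ^ p) (convexOn_rpow hp.le)
    (Real.zero_rpow (by positivity)) (fun x hx => Real.rpow_nonneg hx p) hR σ
  have hsucc (i : Fin (n + 2)) :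
      (⟨(i.1 + 1) % (n + 2), Nat.mod_lt _ (by omega)⟩ : Fin (n + 2)) = i + 1 := by
    ext; simp [Fin.val_add]
  simp only [hRr, hsucc]
  rw [Fin.sum_univ_eq_sum_range (fun t => |R (t + 2) - R t| ^ p)]
  exact key
end

section
/- Let p < 0 be a real number, let N ≥ 5 be odd, and let r : {0,…,N−1} → ℝ be strictly increasing (r₀ < r₁ < ⋯ < r_{N−1}). For a permutation σ of {0,…,N−1}, define the Hamiltonian-cycle cost E(σ) = Σ_{i=0}^{N−1} |r_{σ(i+1 mod N)} − r_{σ(i)}|^p. Let σ* be the permutation σ*(i) = i·(N+1)/2 mod N (so each vertex a is joined to the vertices a + (N−1)/2 mod N and a + (N+1)/2 mod N). Then for every permutation σ, E(σ) ≥ E(σ*); that is, σ* is an optimal traveling-salesman tour on the complete graph with weights |r_i − r_j|^p when p < 0. -/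
/-!
LP duality for the travelling-salesman problem on points of a line. Give each vertex `v` a
potential `u v` and each cut `k` (separating `{0, …, k}` from `{k + 1, …}`) a weight `y k ≥ 0`
such that `u a + u b - ∑_{a ≤ k < b} y k ≤ c a b` for all `a < b`. A Hamiltonian cycle meets
every vertex twice and crosses cut `k` at most `2 min (k + 1) (N - 1 - k)` times, so its cost is
at least `2 ∑ u - ∑ 2 min (k + 1) (N - 1 - k) y k`. The zigzag tour crosses every cut exactly
that often, so it attains this bound once the dual constraints are tight on its edges.

For `c a b = |x b - x a| ^ p` with `p ≤ 0`, convexity of `t ↦ t ^ p` makes `c` a Monge matrix.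
We take the dual tight on the zigzag edges and on the edges at vertices `0` and `2m`; its slack
is then a Monge matrix vanishing on these edges, and such a matrix is nonnegative.
-/

open Finset

lemma rpow_add_sub_rpow_le_of_nonpos {p : ℝ} (hp : p ≤ 0) {a b d : ℝ} (ha : 0 < a)
    (hab : a ≤ b) (hd : 0 ≤ d) : (a + d) ^ p - a ^ p ≤ (b + d) ^ p - b ^ p := by
  have hderiv : ∀ t ∈ Set.Ioi (0 : ℝ), HasDerivAt (fun t => (t + d) ^ p - t ^ p)
      (p * (t + d) ^ (p - 1) - p * t ^ (p - 1)) t := fun t (ht : 0 < t) => by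
    have h : HasDerivAt (fun t => (t + d) ^ p) (p * (t + d) ^ (p - 1)) t := by
      simpa using ((hasDerivAt_id t).add_const d).rpow_const (p := p) (Or.inl (by positivity))
    exact h.sub (Real.hasDerivAt_rpow_const (Or.inl ht.ne'))
  have hmono : MonotoneOn (fun t => (t + d) ^ p - t ^ p) (Set.Ioi 0) := by
    refine monotoneOn_of_hasDerivWithinAt_nonneg (convex_Ioi 0)
      (f' := fun t => p * (t + d) ^ (p - 1) - p * t ^ (p - 1))
      (fun t ht => (hderiv t ht).continuousAt.continuousWithinAt) (fun t ht => ?_) fun t ht => ?_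
    · rw [interior_Ioi] at ht ⊢
      exact (hderiv t ht).hasDerivWithinAt
    · rw [interior_Ioi] at ht
      rw [← mul_sub]
      exact mul_nonneg_of_nonpos_of_nonpos hp <| sub_nonpos.2 <|
        Real.rpow_le_rpow_of_nonpos ht (by linarith) (by linarith)
  exact hmono ha (ha.trans_le hab) hab

lemma Nat.le_of_forall_Ico_le_succ {α : Type*} [Preorder α] {f : ℕ → α} {a b : ℕ}
    (hab : a ≤ b) (h : ∀ n, a ≤ n → n < b → f n ≤ f (n + 1)) : f a ≤ f b := by
  induction b, hab using Nat.le_induction with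
  | base => exact le_rfl
  | succ b hab ih => exact (ih fun n h₁ h₂ => h n h₁ (by omega)).trans (h b hab (by omega))

lemma Nat.le_of_forall_Ico_succ_le {α : Type*} [Preorder α] {f : ℕ → α} {a b : ℕ}
    (hab : a ≤ b) (h : ∀ n, a ≤ n → n < b → f (n + 1) ≤ f n) : f b ≤ f a :=
  Nat.le_of_forall_Ico_le_succ (α := αᵒᵈ) hab h

section GapPow

variable {x : ℕ → ℝ} {p : ℝ} {i i' j j' : ℕ}

noncomputable def gapPow (x : ℕ → ℝ) (p : ℝ) (a b : ℕ) : ℝ := |x b - x a| ^ p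

lemma gapPow_comm (x : ℕ → ℝ) (p : ℝ) (a b : ℕ) : gapPow x p a b = gapPow x p b a := by
  rw [gapPow, gapPow, abs_sub_comm]

lemma gapPow_of_lt (hx : StrictMono x) (hij : i < j) : gapPow x p i j = (x j - x i) ^ p := by
  rw [gapPow, abs_of_pos (sub_pos.2 (hx hij))]

lemma gapPow_le_gapPow_of_le_left (hx : StrictMono x) (hp : p ≤ 0) (hii' : i ≤ i')
    (hi'j : i' < j) : gapPow x p i j ≤ gapPow x p i' j := by
  rw [gapPow_of_lt hx (hii'.trans_lt hi'j), gapPow_of_lt hx hi'j]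
  exact Real.rpow_le_rpow_of_nonpos (sub_pos.2 (hx hi'j))
    (sub_le_sub_left (hx.monotone hii') _) hp

lemma gapPow_le_gapPow_of_le_right (hx : StrictMono x) (hp : p ≤ 0) (hij : i < j)
    (hjj' : j ≤ j') : gapPow x p i j' ≤ gapPow x p i j := by
  rw [gapPow_of_lt hx (hij.trans_le hjj'), gapPow_of_lt hx hij]
  exact Real.rpow_le_rpow_of_nonpos (sub_pos.2 (hx hij))
    (sub_le_sub_right (hx.monotone hjj') _) hp

lemma gapPow_add_gapPow_le (hx : StrictMono x) (hp : p ≤ 0) (hii' : i ≤ i') (hi'j : i' < j)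
    (hjj' : j ≤ j') :
    gapPow x p i j + gapPow x p i' j' ≤ gapPow x p i j' + gapPow x p i' j := by
  have hij := hii'.trans_lt hi'j
  rw [gapPow_of_lt hx hij, gapPow_of_lt hx hi'j, gapPow_of_lt hx (hi'j.trans_le hjj'),
    gapPow_of_lt hx (hij.trans_le hjj')]
  have h := rpow_add_sub_rpow_le_of_nonpos hp (sub_pos.2 (hx hi'j))
    (sub_le_sub_left (hx.monotone hii') (x j)) (sub_nonneg.2 (hx.monotone hjj'))
  simp only [sub_add_sub_cancel'] at h
  linarith

end GapPow

section Monge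

def IsMonge (n : ℕ) (Φ : ℕ → ℕ → ℝ) : Prop :=
  ∀ i j, i + 1 < j → j < n → Φ i j + Φ (i + 1) (j + 1) ≤ Φ i (j + 1) + Φ (i + 1) j

variable {n m : ℕ} {Φ : ℕ → ℕ → ℝ}

lemma IsMonge.sub_succ_right_le (hΦ : IsMonge n Φ) {i i' k : ℕ} (hii' : i ≤ i') (hi'k : i' < k)
    (hk : k < n) : Φ i k - Φ i (k + 1) ≤ Φ i' k - Φ i' (k + 1) :=
  Nat.le_of_forall_Ico_le_succ (f := fun l => Φ l k - Φ l (k + 1)) hii'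
    fun l _ hl => by linarith [hΦ l k (by omega) hk]

lemma IsMonge.sub_succ_left_le (hΦ : IsMonge n Φ) {a j j' : ℕ} (haj : a + 1 < j) (hjj' : j ≤ j')
    (hj' : j' ≤ n) : Φ a j - Φ (a + 1) j ≤ Φ a j' - Φ (a + 1) j' :=
  Nat.le_of_forall_Ico_le_succ (f := fun l => Φ a l - Φ (a + 1) l) hjj'
    fun l hl hl' => by linarith [hΦ a l (by omega) (by omega)]

lemma IsMonge.le_succ_right (hΦ : IsMonge (2 * m) Φ) (hW : ∀ b ≤ m, Φ b (b + m) = 0)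
    (hV : ∀ a < m, Φ a (a + m + 1) = 0)
    {i k : ℕ} (hmk : m ≤ k) (hk : k < 2 * m) (hi : i ≤ k - m) :
    Φ i k ≤ Φ i (k + 1) := by
  have := hΦ.sub_succ_right_le hi (by omega : k - m < k) hk
  have hW' := hW (k - m) (by omega)
  have hV' := hV (k - m) (by omega)
  rw [Nat.sub_add_cancel hmk] at hW' hV'
  linarith

lemma IsMonge.succ_right_le (hΦ : IsMonge (2 * m) Φ) (hW : ∀ b ≤ m, Φ b (b + m) = 0)
    (hV : ∀ a < m, Φ a (a + m + 1) = 0)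
    {i k : ℕ} (hmk : m ≤ k) (hk : k < 2 * m) (hi : k - m ≤ i)
    (hik : i < k) : Φ i (k + 1) ≤ Φ i k := by
  have := hΦ.sub_succ_right_le hi hik hk
  have hW' := hW (k - m) (by omega)
  have hV' := hV (k - m) (by omega)
  rw [Nat.sub_add_cancel hmk] at hW' hV'
  linarith

lemma IsMonge.le_succ_left (hΦ : IsMonge (2 * m) Φ) (hW : ∀ b ≤ m, Φ b (b + m) = 0)
    (hV : ∀ a < m, Φ a (a + m + 1) = 0)
    {a j : ℕ} (ha : a < m) (haj : a + 1 < j) (hj : j ≤ a + m + 1) :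
    Φ a j ≤ Φ (a + 1) j := by
  have := hΦ.sub_succ_left_le haj hj (by omega)
  have hW' := hW (a + 1) ha
  rw [add_right_comm] at hW'
  linarith [hV a ha]

/-- Every pair `i < j` is joined to a zero of `Φ` by a path along which `Φ` decreases. -/
theorem IsMonge.nonneg (hΦ : IsMonge (2 * m) Φ) (hW : ∀ b ≤ m, Φ b (b + m) = 0)
    (hV : ∀ a < m, Φ a (a + m + 1) = 0)
    (hleft : ∀ j, 0 < j → j < m → Φ 0 j = 0)
    (hright : ∀ i, m < i → i < 2 * m → Φ i (2 * m) = 0) {i j : ℕ} (hij : i < j)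
    (hj : j ≤ 2 * m) : 0 ≤ Φ i j := by
  rcases le_or_gt (i + m + 1) j with hlong | hshort
  · rw [← hV i (by omega)]
    exact Nat.le_of_forall_Ico_le_succ hlong fun n hn hnj =>
      hΦ.le_succ_right hW hV (k := n) (by omega) (by omega) (by omega)
  rcases le_or_gt m j with hmj | hjm
  · have hend : Φ i (min (i + m) (2 * m)) = 0 := by
      rcases le_or_gt i m with him | hmi
      · rw [min_eq_left (by omega)]
        exact hW i him
      · rw [min_eq_right (by omega)]
        exact hright i hmi (by omega)
    rw [← hend]
    exact Nat.le_of_forall_Ico_succ_le (le_min (by omega) hj) fun n hjn hn =>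
      hΦ.succ_right_le hW hV (k := n) (by omega) (by omega) (by omega) (by omega)
  · rw [← hleft j (by omega) hjm]
    exact Nat.le_of_forall_Ico_le_succ (Nat.zero_le i) fun n _ hn =>
      hΦ.le_succ_left hW hV (a := n) (by omega) (by omega) (by omega)

end Monge

section Potentials

variable (x : ℕ → ℝ) (p : ℝ) (m : ℕ)

/- An edge `i < j` is charged `leftPot i + rightPot j`. Starting from `leftPot 0 = 0`, these
values are forced by equality on the zigzag edges `(b, b + m)`, `(a, a + m + 1)` and on the edges
`(0, j)`, `(i, 2m)`; `bandPot` is `leftPot` on `[0, m]`. The values `rightPot 0` and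
`leftPot (2m)`, which no edge constrains, are chosen so that `leftPot` increases and `rightPot`
decreases. The dual solution is then `u = (leftPot + rightPot) / 2`, with `y` half the
increments of `leftPot - rightPot`. -/

noncomputable def bandPot (b : ℕ) : ℝ :=
  ∑ a ∈ range b, (gapPow x p (a + 1) (a + m + 1) - gapPow x p a (a + m + 1))

noncomputable def rightPot (j : ℕ) : ℝ :=
  if j ≤ m then gapPow x p 0 (max j 1)
  else gapPow x p (j - m - 1) j - bandPot x p m (j - m - 1)

noncomputable def leftPot (i : ℕ) : ℝ :=
  if i ≤ m then bandPot x p m i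
  else gapPow x p (min i (2 * m - 1)) (2 * m) - rightPot x p m (2 * m)

variable {x p m}

lemma bandPot_succ (b : ℕ) : bandPot x p m (b + 1) =
    bandPot x p m b + gapPow x p (b + 1) (b + m + 1) - gapPow x p b (b + m + 1) := by
  rw [bandPot, sum_range_succ, ← bandPot]
  ring

lemma rightPot_of_le {j : ℕ} (hm : 0 < m) (hj : m ≤ j) :
    rightPot x p m j = gapPow x p (j - m) j - bandPot x p m (j - m) := by
  rcases hj.eq_or_lt with rfl | hj
  · simp [rightPot, bandPot, max_eq_left (show 1 ≤ m by omega)]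
  · obtain ⟨b, rfl⟩ : ∃ b, j = b + m + 1 := ⟨j - m - 1, by omega⟩
    rw [rightPot, if_neg (by omega), show b + m + 1 - m - 1 = b by omega,
      show b + m + 1 - m = b + 1 by omega, bandPot_succ]
    ring

lemma leftPot_of_le {i : ℕ} (hm : 0 < m) (hi : m ≤ i) :
    leftPot x p m i = gapPow x p (min i (2 * m - 1)) (2 * m) - rightPot x p m (2 * m) := by
  rcases hi.eq_or_lt with rfl | hi
  · rw [leftPot, if_pos le_rfl, rightPot_of_le hm (by omega), show 2 * m - m = m by omega,
      min_eq_left (by omega)]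
    ring
  · rw [leftPot, if_neg (by omega)]

lemma leftPot_add_rightPot_add (hm : 0 < m) {b : ℕ} (hb : b ≤ m) :
    leftPot x p m b + rightPot x p m (b + m) = gapPow x p b (b + m) := by
  rw [leftPot, if_pos hb, rightPot_of_le hm (by omega), Nat.add_sub_cancel]
  ring

lemma leftPot_add_rightPot_add_add_one {a : ℕ} (ha : a < m) :
    leftPot x p m a + rightPot x p m (a + m + 1) = gapPow x p a (a + m + 1) := by
  rw [leftPot, if_pos ha.le, rightPot, if_neg (by omega), show a + m + 1 - m - 1 = a by omega]
  ring

lemma leftPot_zero_add_rightPot {j : ℕ} (hj : 0 < j) (hjm : j ≤ m) :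
    leftPot x p m 0 + rightPot x p m j = gapPow x p 0 j := by
  simp [leftPot, rightPot, bandPot, hjm, max_eq_left (show 1 ≤ j by omega)]

lemma leftPot_add_rightPot_two_mul {i : ℕ} (hmi : m < i) (hi : i < 2 * m) :
    leftPot x p m i + rightPot x p m (2 * m) = gapPow x p i (2 * m) := by
  rw [leftPot, if_neg (by omega), min_eq_left (by omega)]
  ring

lemma leftPot_le_succ (hx : StrictMono x) (hp : p ≤ 0) (hm : 0 < m) (k : ℕ) :
    leftPot x p m k ≤ leftPot x p m (k + 1) := by
  rcases lt_or_ge k m with hkm | hmk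
  · rw [leftPot, leftPot, if_pos hkm.le, if_pos (show k + 1 ≤ m by omega), bandPot_succ]
    linarith [gapPow_le_gapPow_of_le_left hx hp (Nat.le_succ k) (by omega : k + 1 < k + m + 1)]
  · rw [leftPot_of_le hm hmk, leftPot_of_le hm (by omega)]
    linarith [gapPow_le_gapPow_of_le_left hx hp (min_le_min_right (2 * m - 1) (Nat.le_succ k))
      (by omega : min (k + 1) (2 * m - 1) < 2 * m)]

lemma rightPot_succ_le (hx : StrictMono x) (hp : p ≤ 0) (hm : 0 < m) (k : ℕ) :
    rightPot x p m (k + 1) ≤ rightPot x p m k := by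
  rcases lt_or_ge k m with hkm | hmk
  · rw [rightPot, rightPot, if_pos (show k + 1 ≤ m by omega), if_pos hkm.le]
    exact gapPow_le_gapPow_of_le_right hx hp (by omega) (max_le_max_right 1 (Nat.le_succ k))
  · rw [rightPot_of_le hm hmk, rightPot_of_le hm (by omega),
      show k + 1 - m = k - m + 1 by omega, bandPot_succ, show k - m + m + 1 = k + 1 by omega]
    linarith [gapPow_le_gapPow_of_le_right hx hp (by omega : k - m < k) (Nat.le_succ k)]

lemma isMonge_gapPow_sub_pot (hx : StrictMono x) (hp : p ≤ 0) :
    IsMonge (2 * m) fun i j => gapPow x p i j - leftPot x p m i - rightPot x p m j :=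
  fun i j hij _ => by
    linarith [gapPow_add_gapPow_le hx hp (Nat.le_succ i) hij (Nat.le_succ j)]

lemma leftPot_add_rightPot_le (hx : StrictMono x) (hp : p ≤ 0) (hm : 0 < m) {i j : ℕ}
    (hij : i < j) (hj : j ≤ 2 * m) :
    leftPot x p m i + rightPot x p m j ≤ gapPow x p i j := by
  have := (isMonge_gapPow_sub_pot hx hp).nonneg
    (fun b hb => by simp only [← leftPot_add_rightPot_add hm hb]; ring)
    (fun a ha => by simp only [← leftPot_add_rightPot_add_add_one ha]; ring)
    (fun j hj hjm => by simp only [← leftPot_zero_add_rightPot hj hjm.le]; ring)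
    (fun i hmi hi => by simp only [← leftPot_add_rightPot_two_mul hmi hi]; ring) hij hj
  linarith

end Potentials

section CutDual

def maxCrossings (N k : ℕ) : ℕ := 2 * min (k + 1) (N - 1 - k)

lemma sum_sum_Ico_eq_sum_card_mul {ι : Type*} (s : Finset ι) (g h : ι → ℕ) {M : ℕ}
    (hh : ∀ i ∈ s, h i ≤ M) (y : ℕ → ℝ) :
    ∑ i ∈ s, ∑ k ∈ Ico (g i) (h i), y k
      = ∑ k ∈ range M, #{i ∈ s | g i ≤ k ∧ k < h i} * y k := by
  rw [sum_comm' (t' := range M) (s' := fun k => {i ∈ s | g i ≤ k ∧ k < h i})]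
  · simp only [sum_const, nsmul_eq_mul]
  · intro i k
    simp only [mem_Ico, mem_filter, mem_range]
    constructor
    · rintro ⟨hi, hk⟩
      exact ⟨⟨hi, hk⟩, by have := hh i hi; omega⟩
    · rintro ⟨⟨hi, hk⟩, -⟩
      exact ⟨hi, hk⟩

lemma card_crossing_le {ι : Type*} [Fintype ι] {N : ℕ} {e₁ e₂ : ι → ℕ}
    (h₁ : Function.Injective e₁) (h₂ : Function.Injective e₂) (hN₁ : ∀ i, e₁ i < N)
    (hN₂ : ∀ i, e₂ i < N) (k : ℕ) :
    #{i | min (e₁ i) (e₂ i) ≤ k ∧ k < max (e₁ i) (e₂ i)} ≤ maxCrossings N k := by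
  classical
  have hcard (t : Finset ℕ) : #{i | e₁ i ∈ t} + #{i | e₂ i ∈ t} ≤ 2 * #t := by
    have : #{i | e₁ i ∈ t} ≤ #t :=
      card_le_card_of_injOn e₁ (fun i hi => by simpa using hi) h₁.injOn
    have : #{i | e₂ i ∈ t} ≤ #t :=
      card_le_card_of_injOn e₂ (fun i hi => by simpa using hi) h₂.injOn
    omega
  have hcover (t : Finset ℕ) (ht : ∀ i, min (e₁ i) (e₂ i) ≤ k ∧ k < max (e₁ i) (e₂ i) →
      e₁ i ∈ t ∨ e₂ i ∈ t) :
      #{i | min (e₁ i) (e₂ i) ≤ k ∧ k < max (e₁ i) (e₂ i)} ≤ 2 * #t := by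
    refine (card_le_card fun i hi => ?_).trans ((card_union_le _ _).trans (hcard t))
    simpa using ht i (mem_filter.1 hi).2
  have hlow := hcover (range (k + 1)) fun i hi => by simp only [mem_range]; omega
  have hhigh := hcover (Ico (k + 1) N) fun i hi => by
    simp only [mem_Ico]; have := hN₁ i; have := hN₂ i; omega
  simp only [card_range, Nat.card_Ico] at hlow hhigh
  unfold maxCrossings
  omega

theorem cutDual_le_tourCost {N : ℕ} [NeZero N] (hN : 1 < N) {c : ℕ → ℕ → ℝ}
    (hc_comm : ∀ a b, c a b = c b a) {u y : ℕ → ℝ} (hy : ∀ k, k + 1 < N → 0 ≤ y k)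
    (hc : ∀ a b, a < b → b < N → u a + u b - ∑ k ∈ Ico a b, y k ≤ c a b)
    (σ : Equiv.Perm (Fin N)) :
    2 * ∑ v ∈ range N, u v - ∑ k ∈ range (N - 1), maxCrossings N k * y k
      ≤ ∑ i, c (σ i) (σ (i + 1)) := by
  have hne (i : Fin N) : (σ i : ℕ) ≠ σ (i + 1) := fun h => by
    have := σ.injective (Fin.ext h)
    simp only [left_eq_add, Fin.one_eq_zero_iff] at this
    omega
  have hedge (i : Fin N) : u (σ i) + u (σ (i + 1))
      - ∑ k ∈ Ico (min (σ i : ℕ) (σ (i + 1))) (max (σ i : ℕ) (σ (i + 1))), y k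
      ≤ c (σ i) (σ (i + 1)) := by
    rcases (hne i).lt_or_gt with h | h
    · rw [min_eq_left h.le, max_eq_right h.le]
      exact hc _ _ h (σ (i + 1)).isLt
    · rw [min_eq_right h.le, max_eq_left h.le, hc_comm, add_comm (u _)]
      exact hc _ _ h (σ i).isLt
  have hu : ∑ i, (u (σ i) + u (σ (i + 1))) = 2 * ∑ v ∈ range N, u v := by
    have h₁ : ∑ i, u (σ i) = ∑ v ∈ range N, u v :=
      (Equiv.sum_comp σ fun v => u v).trans (Fin.sum_univ_eq_sum_range u N)
    have h₂ : ∑ i, u (σ (i + 1)) = ∑ v ∈ range N, u v :=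
      (Equiv.sum_comp ((Equiv.addRight 1).trans σ) fun v => u v).trans
        (Fin.sum_univ_eq_sum_range u N)
    rw [sum_add_distrib, h₁, h₂]
    ring
  have hcross : ∑ i, ∑ k ∈ Ico (min (σ i : ℕ) (σ (i + 1))) (max (σ i : ℕ) (σ (i + 1))), y k
      ≤ ∑ k ∈ range (N - 1), maxCrossings N k * y k := by
    rw [sum_sum_Ico_eq_sum_card_mul _ _ _ (M := N - 1) fun i _ => by
      have := (σ i).isLt; have := (σ (i + 1)).isLt; omega]
    refine sum_le_sum fun k hk => mul_le_mul_of_nonneg_right ?_ (hy k (by simp only [mem_range] at hk; omega))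
    exact_mod_cast card_crossing_le (Fin.val_injective.comp σ.injective)
      (Fin.val_injective.comp ((Equiv.addRight 1).trans σ).injective) (fun i => (σ i).isLt)
      (fun i => (σ (i + 1)).isLt) k
  have := sum_le_sum fun i (_ : i ∈ univ) => hedge i
  rw [sum_sub_distrib, hu] at this
  linarith

lemma card_zigzag_crossing {m k : ℕ} (hk : k < 2 * m) :
    #{a ∈ range m | a ≤ k ∧ k < a + m + 1} + #{b ∈ range (m + 1) | b ≤ k ∧ k < b + m}
      = maxCrossings (2 * m + 1) k := by
  have h₁ : {a ∈ range m | a ≤ k ∧ k < a + m + 1} = Ico (k - m) (min (k + 1) m) := by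
    ext a; simp only [mem_filter, mem_range, mem_Ico]; omega
  have h₂ : {b ∈ range (m + 1) | b ≤ k ∧ k < b + m}
      = Ico (k + 1 - m) (min (k + 1) (m + 1)) := by
    ext b; simp only [mem_filter, mem_range, mem_Ico]; omega
  rw [h₁, h₂, Nat.card_Ico, Nat.card_Ico, maxCrossings]
  omega

lemma sum_zigzag_cutDual (u y : ℕ → ℝ) (m : ℕ) :
    ∑ a ∈ range m, (u a + u (a + m + 1) - ∑ k ∈ Ico a (a + m + 1), y k)
      + ∑ b ∈ range (m + 1), (u b + u (b + m) - ∑ k ∈ Ico b (b + m), y k)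
    = 2 * ∑ v ∈ range (2 * m + 1), u v
      - ∑ k ∈ range (2 * m), maxCrossings (2 * m + 1) k * y k := by
  have h₁ := sum_range_add u m (m + 1)
  have h₂ := sum_range_add u (m + 1) m
  rw [show m + (m + 1) = 2 * m + 1 by ring] at h₁
  rw [show m + 1 + m = 2 * m + 1 by ring] at h₂
  have hcross := sum_sum_Ico_eq_sum_card_mul (range m) (fun a => a) (fun a => a + m + 1)
    (M := 2 * m) (fun a ha => by simp only [mem_range] at ha; omega) y
  have hcross' := sum_sum_Ico_eq_sum_card_mul (range (m + 1)) (fun b => b) (fun b => b + m)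
    (M := 2 * m) (fun b hb => by simp only [mem_range] at hb; omega) y
  have hcard : ∑ k ∈ range (2 * m), maxCrossings (2 * m + 1) k * y k
      = ∑ k ∈ range (2 * m), #{a ∈ range m | a ≤ k ∧ k < a + m + 1} * y k
        + ∑ k ∈ range (2 * m), #{b ∈ range (m + 1) | b ≤ k ∧ k < b + m} * y k := by
    rw [← sum_add_distrib]
    refine sum_congr rfl fun k hk => ?_
    rw [← add_mul, ← card_zigzag_crossing (mem_range.1 hk)]
    push_cast
    rfl
  have e₁ : ∑ a ∈ range m, u (a + m + 1) = ∑ a ∈ range m, u (m + 1 + a) :=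
    sum_congr rfl fun a _ => by ring_nf
  have e₂ : ∑ b ∈ range (m + 1), u (b + m) = ∑ b ∈ range (m + 1), u (m + b) :=
    sum_congr rfl fun b _ => by ring_nf
  simp only [sum_sub_distrib, sum_add_distrib, hcard, ← hcross, ← hcross', e₁, e₂]
  linarith

lemma sum_range_zigzag (g : ℕ → ℕ → ℝ) (hg : ∀ a b, g a b = g b a) (m : ℕ) :
    ∑ i ∈ range (2 * m + 1), g (i * (m + 1) % (2 * m + 1)) ((i + 1) * (m + 1) % (2 * m + 1))
      = ∑ a ∈ range m, g a (a + m + 1) + ∑ b ∈ range (m + 1), g b (b + m) := by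
  set N := 2 * m + 1 with hN
  have hstep (i : ℕ) : (i + 1) * (m + 1) % N = (i * (m + 1) % N + (m + 1)) % N := by
    rw [Nat.mod_add_mod, add_one_mul]
  have hinv {c d : ℕ} (hcd : c * d = N + 1) {i : ℕ} (hi : i < N) : i * c % N * d % N = i := by
    rw [Nat.mod_mul_mod, mul_assoc, hcd, mul_add, mul_one, Nat.mul_add_mod', Nat.mod_eq_of_lt hi]
  have hreindex : ∑ i ∈ range N, g (i * (m + 1) % N) ((i * (m + 1) % N + (m + 1)) % N)
      = ∑ s ∈ range N, g s ((s + (m + 1)) % N) :=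
    sum_nbij' (fun i => i * (m + 1) % N) (fun s => s * 2 % N)
      (fun i _ => mem_range.2 (Nat.mod_lt _ (by omega)))
      (fun s _ => mem_range.2 (Nat.mod_lt _ (by omega)))
      (fun i hi => hinv (by omega) (mem_range.1 hi))
      (fun s hs => hinv (by omega) (mem_range.1 hs))
      (fun i _ => rfl)
  rw [sum_congr rfl fun i _ => by rw [hstep], hreindex, hN,
    show 2 * m + 1 = m + (m + 1) by ring, sum_range_add]
  congr 1
  · refine sum_congr rfl fun a ha => ?_
    rw [Nat.mod_eq_of_lt (by simp only [mem_range] at ha; omega), add_assoc]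
  · refine sum_congr rfl fun b hb => ?_
    rw [hg, show m + b + (m + 1) = b + (m + (m + 1)) by ring, Nat.add_mod_right,
      Nat.mod_eq_of_lt (by simp only [mem_range] at hb; omega), add_comm b m]

end CutDual

theorem exists_cutDual_gapPow {x : ℕ → ℝ} {p : ℝ} {m : ℕ} (hx : StrictMono x) (hp : p ≤ 0)
    (hm : 0 < m) :
    ∃ u y : ℕ → ℝ, (∀ k, 0 ≤ y k)
      ∧ (∀ a b, a < b → b < 2 * m + 1 → u a + u b - ∑ k ∈ Ico a b, y k ≤ gapPow x p a b)
      ∧ (∀ a ∈ range m, gapPow x p a (a + m + 1)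
          = u a + u (a + m + 1) - ∑ k ∈ Ico a (a + m + 1), y k)
      ∧ (∀ b ∈ range (m + 1), gapPow x p b (b + m)
          = u b + u (b + m) - ∑ k ∈ Ico b (b + m), y k) := by
  set L := leftPot x p m
  set R := rightPot x p m
  have hLR {a b : ℕ} (hab : a ≤ b) :
      (L a + R a) / 2 + (L b + R b) / 2
        - ∑ k ∈ Ico a b, ((L (k + 1) - R (k + 1)) - (L k - R k)) / 2 = L a + R b := by
    rw [← sum_div, sum_Ico_sub (fun k => L k - R k) hab]
    ring
  refine ⟨fun v => (L v + R v) / 2, fun k => ((L (k + 1) - R (k + 1)) - (L k - R k)) / 2,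
    fun k => ?_, fun a b hab hb => ?_, fun a ha => ?_, fun b hb => ?_⟩
  · linarith [leftPot_le_succ hx hp hm k, rightPot_succ_le hx hp hm k]
  · rw [hLR hab.le]
    exact leftPot_add_rightPot_le hx hp hm hab (by omega)
  · rw [hLR (by omega), leftPot_add_rightPot_add_add_one (mem_range.1 ha)]
  · rw [hLR (by omega), leftPot_add_rightPot_add hm (Nat.lt_succ_iff.1 (mem_range.1 hb))]

lemma exists_strictMono_extension {N : ℕ} {r : Fin N → ℝ} (hr : StrictMono r) :
    ∃ x : ℕ → ℝ, StrictMono x ∧ ∀ i : Fin N, x i = r i := by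
  refine ⟨fun n => if h : n < N then r ⟨n, h⟩ else ∑ i, |r i| + n,
    strictMono_nat_of_lt_succ fun n => ?_, fun i => by simp⟩
  by_cases h₁ : n + 1 < N
  · simpa [h₁, (Nat.lt_succ_self n).trans h₁] using hr (Fin.mk_lt_mk.2 (Nat.lt_succ_self n))
  by_cases h₀ : n < N
  · have := single_le_sum (fun i _ => abs_nonneg (r i)) (mem_univ (⟨n, h₀⟩ : Fin N))
    simp only [h₀, h₁, dite_true, dite_false]
    push_cast
    linarith [le_abs_self (r ⟨n, h₀⟩)]
  · simp [h₀, h₁]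

/-- For `p < 0`, odd `N ≥ 5` and strictly increasing points `r 0 < ⋯ < r (N-1)`, the
Hamiltonian cycle `σ*(i) = i·(N+1)/2 mod N` (joining each vertex `a` to the vertices
`a + (N-1)/2 mod N` and `a + (N+1)/2 mod N`) is an optimal traveling-salesman tour for
weights `|rᵢ - rⱼ|^p`. -/
theorem stmt_6 (N : ℕ) (hN : 5 ≤ N) (hodd : Odd N) (p : ℝ) (hp : p < 0)
    (r : Fin N → ℝ) (hr : StrictMono r) (σ : Equiv.Perm (Fin N)) :
    (∑ i ∈ Finset.range N,
        |r ⟨((i + 1) * ((N + 1) / 2)) % N, Nat.mod_lt _ (by omega)⟩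
          - r ⟨(i * ((N + 1) / 2)) % N, Nat.mod_lt _ (by omega)⟩| ^ p)
    ≤ ∑ i : Fin N, |r (σ ⟨(i.1 + 1) % N, Nat.mod_lt _ (by omega)⟩) - r (σ i)| ^ p := by
  obtain ⟨m, rfl⟩ := hodd
  obtain ⟨x, hx, hxr⟩ := exists_strictMono_extension hr
  obtain ⟨u, y, hy, hc, hV, hW⟩ := exists_cutDual_gapPow hx hp.le (m := m) (by omega)
  calc _ = ∑ i ∈ range (2 * m + 1),
        gapPow x p (i * (m + 1) % (2 * m + 1)) ((i + 1) * (m + 1) % (2 * m + 1)) :=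
        sum_congr rfl fun i _ => by
          simp only [← hxr, gapPow, show (2 * m + 1 + 1) / 2 = m + 1 by omega]
    _ = ∑ a ∈ range m, gapPow x p a (a + m + 1) + ∑ b ∈ range (m + 1), gapPow x p b (b + m) :=
        sum_range_zigzag _ (gapPow_comm x p) m
    _ = 2 * ∑ v ∈ range (2 * m + 1), u v
          - ∑ k ∈ range (2 * m), maxCrossings (2 * m + 1) k * y k := by
        rw [sum_congr rfl hV, sum_congr rfl hW, sum_zigzag_cutDual]
    _ ≤ ∑ i, gapPow x p (σ i) (σ (i + 1)) :=
        cutDual_le_tourCost (by omega) (gapPow_comm x p) (fun k _ => hy k) hc σ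
    _ = _ := sum_congr rfl fun i _ => by
        have hsucc : (⟨(i.1 + 1) % (2 * m + 1), Nat.mod_lt _ (by omega)⟩ : Fin (2 * m + 1))
            = i + 1 := Fin.ext (by simp [Fin.val_add])
        simp only [← hxr, gapPow, hsucc]
end

section
/- Let N ≥ 4 and let σ be a permutation of {1,…,N}, encoding the Hamiltonian cycle with edge set E(σ) = { {σ(i), σ(i+1 mod N)} : 1 ≤ i ≤ N }. Say two edges {a,b} (with a < b) and {c,d} (with c < d) of the cycle cross if a < c < b < d or c < a < d < b. Fix an edge e = {a,b} ∈ E(σ) with a < b, let m₁ = b − a − 1 be the number of vertices strictly between a and b, and let m₂ = N − 2 − m₁. Then the number of edges of E(σ) that cross e is at most 2·min(m₁, m₂) if m₁ ≠ m₂, and at most 2·m₁ − 1 if m₁ = m₂. -/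
open scoped Classical

/-!
An edge crossing `{a, b}` has one endpoint strictly between `a` and `b` and the other outside
`[a, b]`. Every vertex lies on exactly two edges of the cycle, so at most `2 m₁` edges have an
endpoint in the open interval and at most `2 m₂` edges have one outside the closed interval.
When `m₁ = m₂`, one of the two edges at `a` leads to a vertex `x ≠ b`; this edge does not cross
`{a, b}` but is counted by the bound for whichever side contains `x`, which saves one.
-/

open Finset

section Crossing

variable {α : Type*} [LinearOrder α]

def EdgeCrosses (a b u v : α) : Prop :=
  (a < min u v ∧ min u v < b ∧ b < max u v) ∨ (min u v < a ∧ a < max u v ∧ max u v < b)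

variable {a b u v : α}

lemma edgeCrosses_comm : EdgeCrosses a b u v ↔ EdgeCrosses a b v u := by
  rw [EdgeCrosses, EdgeCrosses, min_comm, max_comm]

lemma not_edgeCrosses_left_self : ¬EdgeCrosses a b a v := by
  unfold EdgeCrosses
  rcases le_total a v with h | h
  · rw [min_eq_left h, max_eq_right h]; rintro (h' | h') <;> order
  · rw [min_eq_right h, max_eq_left h]; rintro (h' | h') <;> order

lemma EdgeCrosses.between (h : EdgeCrosses a b u v) : (a < u ∧ u < b) ∨ (a < v ∧ v < b) := by
  unfold EdgeCrosses at h
  rcases le_total u v with huv | huv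
  · rw [min_eq_left huv, max_eq_right huv] at h; tauto
  · rw [min_eq_right huv, max_eq_left huv] at h; tauto

lemma EdgeCrosses.outside (h : EdgeCrosses a b u v) :
    ¬(a ≤ u ∧ u ≤ b) ∨ ¬(a ≤ v ∧ v ≤ b) := by
  unfold EdgeCrosses at h
  rcases le_total u v with huv | huv
  · rw [min_eq_left huv, max_eq_right huv] at h
    rcases h with h | h
    · exact Or.inr fun hv => h.2.2.not_ge hv.2
    · exact Or.inl fun hu => h.1.not_ge hu.1
  · rw [min_eq_right huv, max_eq_left huv] at h
    rcases h with h | h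
    · exact Or.inl fun hu => h.2.2.not_ge hu.2
    · exact Or.inr fun hv => h.1.not_ge hv.1

end Crossing

section Incidence

variable {ι β : Type*} [Fintype ι] [DecidableEq β]

lemma card_filter_equiv_mem (f : ι ≃ β) (T : Finset β) :
    (univ.filter fun x => f x ∈ T).card = T.card :=
  card_bij (fun x _ => f x) (by simp) (by simp) fun y hy => ⟨f.symm y, by simpa using hy⟩

lemma card_filter_equiv_mem_or_mem_le (f g : ι ≃ β) (T : Finset β) :
    (univ.filter fun x => f x ∈ T ∨ g x ∈ T).card ≤ 2 * T.card := by
  rw [filter_or, two_mul]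
  calc _ ≤ (univ.filter fun x => f x ∈ T).card + (univ.filter fun x => g x ∈ T).card :=
        card_union_le _ _
    _ = T.card + T.card := by rw [card_filter_equiv_mem, card_filter_equiv_mem]

end Incidence

section Cycle

variable {n : ℕ} [NeZero n]

def incidentPositions (σ : Equiv.Perm (Fin n)) (T : Finset (Fin n)) : Finset (Fin n) :=
  univ.filter fun j => σ j ∈ T ∨ σ (j + 1) ∈ T

lemma card_incidentPositions_le (σ : Equiv.Perm (Fin n)) (T : Finset (Fin n)) :
    (incidentPositions σ T).card ≤ 2 * T.card :=
  card_filter_equiv_mem_or_mem_le σ ((Equiv.addRight 1).trans σ) T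

lemma Fin.mk_add_one_mod (j : Fin n) (h : (j.1 + 1) % n < n) :
    (⟨(j.1 + 1) % n, h⟩ : Fin n) = j + 1 := by
  ext; simp [Fin.val_add]

lemma Fin.sub_one_ne_add_one (hn : 3 ≤ n) (p : Fin n) : p - 1 ≠ p + 1 := by
  intro h
  have h2 : (1 : Fin n) + 1 = 0 := by
    rw [← sub_eq_zero] at h
    rw [← neg_eq_zero, ← h]; abel
  rw [Fin.ext_iff, Fin.val_add, Fin.val_one', Fin.val_zero, Nat.mod_eq_of_lt (a := 1) (by omega),
    Nat.mod_eq_of_lt (by omega)] at h2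
  omega

lemma exists_cycle_neighbor_ne (hn : 3 ≤ n) (σ : Equiv.Perm (Fin n)) (a b : Fin n) :
    ∃ k x, x ≠ a ∧ x ≠ b ∧ ((σ k = a ∧ σ (k + 1) = x) ∨ (σ k = x ∧ σ (k + 1) = a)) := by
  set p := σ.symm a
  have hp : σ p = a := σ.apply_symm_apply a
  have hn1 : n ≠ 1 := by omega
  have hprev : σ (p - 1) ≠ a := fun h => hn1 (by simpa using σ.injective (h.trans hp.symm))
  have hnext : σ (p + 1) ≠ a := fun h => hn1 (by simpa using σ.injective (h.trans hp.symm))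
  by_cases hb : σ (p - 1) = b
  · refine ⟨p, σ (p + 1), hnext, fun h => ?_, Or.inl ⟨hp, rfl⟩⟩
    exact Fin.sub_one_ne_add_one hn p (σ.injective (hb.trans h.symm))
  · exact ⟨p - 1, σ (p - 1), hprev, hb, Or.inr ⟨rfl, by rwa [sub_add_cancel]⟩⟩

variable {σ : Equiv.Perm (Fin n)} {a b : Fin n} {C : Finset (Fin n)}

lemma card_lt_of_subset_incidentPositions {T : Finset (Fin n)} {k : Fin n}
    (hC : C ⊆ incidentPositions σ T) (hk : k ∈ incidentPositions σ T) (hkC : k ∉ C) :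
    C.card < 2 * T.card :=
  (card_lt_card (ssubset_of_subset_of_ne hC fun h => hkC (h ▸ hk))).trans_le
    (card_incidentPositions_le σ T)

variable (hC : ∀ j ∈ C, EdgeCrosses a b (σ j) (σ (j + 1)))
include hC

lemma subset_incidentPositions_Ioo : C ⊆ incidentPositions σ (Ioo a b) := fun j hj => by
  simpa [incidentPositions] using (hC j hj).between

lemma subset_incidentPositions_compl_Icc : C ⊆ incidentPositions σ (Icc a b)ᶜ := fun j hj => by
  simpa [incidentPositions] using (hC j hj).outside

lemma exists_mem_incidentPositions_not_mem (hn : 3 ≤ n) :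
    ∃ k ∉ C, k ∈ incidentPositions σ (Ioo a b) ∨ k ∈ incidentPositions σ (Icc a b)ᶜ := by
  obtain ⟨k, x, hxa, hxb, hk⟩ := exists_cycle_neighbor_ne hn σ a b
  have hxk : σ k = x ∨ σ (k + 1) = x := by tauto
  refine ⟨k, fun hkC => ?_, ?_⟩
  · rcases hk with ⟨hk, hk'⟩ | ⟨hk, hk'⟩
    · exact not_edgeCrosses_left_self (hk ▸ hC k hkC)
    · exact not_edgeCrosses_left_self (edgeCrosses_comm.1 (hk' ▸ hC k hkC))
  · by_cases hx : a < x ∧ x < b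
    · left; simp only [incidentPositions, mem_filter, mem_univ, true_and, mem_Ioo]
      rcases hxk with h | h <;> rw [h] <;> tauto
    · right; simp only [incidentPositions, mem_filter, mem_univ, true_and, mem_compl, mem_Icc]
      have : ¬(a ≤ x ∧ x ≤ b) := fun h => hx ⟨lt_of_le_of_ne h.1 hxa.symm, lt_of_le_of_ne h.2 hxb⟩
      rcases hxk with h | h <;> rw [h] <;> tauto

lemma card_le_of_forall_edgeCrosses (hn : 3 ≤ n) (hab : a < b) :
    C.card ≤ if b.1 - a.1 - 1 ≠ n - 2 - (b.1 - a.1 - 1)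
      then 2 * min (b.1 - a.1 - 1) (n - 2 - (b.1 - a.1 - 1))
      else 2 * (b.1 - a.1 - 1) - 1 := by
  have hIoo := subset_incidentPositions_Ioo hC
  have hIcc := subset_incidentPositions_compl_Icc hC
  have cIoo : (Ioo a b).card = b.1 - a.1 - 1 := Fin.card_Ioo a b
  have cIcc : (Icc a b)ᶜ.card = n - (b.1 + 1 - a.1) := by
    rw [card_compl, Fintype.card_fin, Fin.card_Icc]
  have hle_Ioo := (card_le_card hIoo).trans (card_incidentPositions_le σ _)
  have hle_Icc := (card_le_card hIcc).trans (card_incidentPositions_le σ _)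
  have hab' : a.1 < b.1 := hab
  have hb := b.isLt
  split_ifs
  · omega
  · obtain ⟨k, hkC, hk⟩ := exists_mem_incidentPositions_not_mem hC hn
    have hlt : C.card < 2 * (Ioo a b).card ∨ C.card < 2 * (Icc a b)ᶜ.card :=
      hk.imp (card_lt_of_subset_incidentPositions hIoo · hkC)
        (card_lt_of_subset_incidentPositions hIcc · hkC)
    omega

end Cycle

/-- Bound on the number of edges of a Hamiltonian cycle on `{0,…,N-1}` that cross a fixed
edge `{a,b}` (`a < b`): with `m₁` vertices strictly between `a` and `b` and
`m₂ = N - 2 - m₁`, the number of crossing edges is at most `2·min(m₁,m₂)` when `m₁ ≠ m₂`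
and at most `2·m₁ - 1` when `m₁ = m₂`. -/
theorem stmt_7 (N : ℕ) (hN : 4 ≤ N) (σ : Equiv.Perm (Fin N))
    (a b : Fin N) (hab : a < b) :
    (Finset.univ.filter fun j : Fin N =>
        (a < min (σ j) (σ ⟨(j.1 + 1) % N, Nat.mod_lt _ (by omega)⟩) ∧
          min (σ j) (σ ⟨(j.1 + 1) % N, Nat.mod_lt _ (by omega)⟩) < b ∧
          b < max (σ j) (σ ⟨(j.1 + 1) % N, Nat.mod_lt _ (by omega)⟩)) ∨
        (min (σ j) (σ ⟨(j.1 + 1) % N, Nat.mod_lt _ (by omega)⟩) < a ∧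
          a < max (σ j) (σ ⟨(j.1 + 1) % N, Nat.mod_lt _ (by omega)⟩) ∧
          max (σ j) (σ ⟨(j.1 + 1) % N, Nat.mod_lt _ (by omega)⟩) < b)).card
    ≤ if b.1 - a.1 - 1 ≠ N - 2 - (b.1 - a.1 - 1)
        then 2 * min (b.1 - a.1 - 1) (N - 2 - (b.1 - a.1 - 1))
        else 2 * (b.1 - a.1 - 1) - 1 := by
  have : NeZero N := ⟨by omega⟩
  simp only [Fin.mk_add_one_mod]
  exact card_le_of_forall_edgeCrosses (fun j hj => (mem_filter.1 hj).2) (by omega) hab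
end

section
/- Let V be a finite set with |V| = 2N vertices and let w assign to each unordered pair of distinct vertices of V a nonnegative real weight. For 0 ≤ k ≤ N, a k-matching is a set of k pairwise vertex-disjoint unordered pairs of distinct vertices of V, and let E_k denote the minimum, over all k-matchings M, of Σ_{e ∈ M} w(e) (with E₀ = 0). Then for every 1 ≤ n ≤ N − 1, E_{n+1} − E_n ≥ E_n − E_{n−1}; that is, the optimal partial-matching cost is a convex function of the matching size. -/
/-! Convexity comes from an exchange property of matchings. If `A` and `B` are matchings with
`#A < #B`, their edges can be redistributed (as a multiset) into matchings `C` and `D` with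
`#C = #A + 1` and `#D = #B - 1`: take an edge `vu ∈ B` with `v` unmatched by `A`; if `u` is also
unmatched, move `vu` into `A`, and otherwise remove `vu` and the edge `ux ∈ A`, redistribute the
rest by induction, and put `vu` and `ux` back on different sides, so that the side receiving `ux`
does not yet cover `x`. Applied to optimal `(n-1)`- and `(n+1)`-matchings this yields two
`n`-matchings of the same total weight, whence `2 E n ≤ E (n-1) + E (n+1)`. -/

/-- `IsKMatching k M` means `M` is a set of `k` pairwise vertex-disjoint edges
(unordered pairs of distinct vertices) of the complete graph on `V`. -/
def IsKMatching {V : Type*} [DecidableEq V] (k : ℕ) (M : Finset (Sym2 V)) : Prop :=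
  M.card = k ∧ (∀ e ∈ M, ¬ e.IsDiag) ∧
    (M : Set (Sym2 V)).Pairwise (fun e f => ∀ v : V, v ∈ e → v ∉ f)

open Finset

namespace Finset

theorem sum_add_sum_eq_of_val_add_val_eq {α β : Type*} [AddCommMonoid β] {A B C D : Finset α}
    (f : α → β) (h : C.val + D.val = A.val + B.val) :
    ∑ a ∈ C, f a + ∑ a ∈ D, f a = ∑ a ∈ A, f a + ∑ a ∈ B, f a := by
  simp only [sum_eq_multiset_sum, ← Multiset.sum_add, ← Multiset.map_add, h]

section Multiset

variable {α : Type*} [DecidableEq α] {A B C D : Finset α} {a b : α}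

theorem val_insert_add_val_erase (ha : a ∉ A) (hb : a ∈ B) :
    (insert a A).val + (B.erase a).val = A.val + B.val := by
  rw [insert_val_of_notMem ha, erase_val, Multiset.cons_add, ← Multiset.add_cons,
    Multiset.cons_erase (mem_val.mpr hb)]

theorem val_insert_add_val_insert (ha : a ∉ C) (hb : b ∉ D) :
    (insert a C).val + (insert b D).val = a ::ₘ b ::ₘ (C.val + D.val) := by
  rw [insert_val_of_notMem ha, insert_val_of_notMem hb, Multiset.cons_add, Multiset.add_cons]

theorem cons_cons_val_erase_add_val_erase (ha : a ∈ B) (hb : b ∈ A) :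
    a ::ₘ b ::ₘ ((A.erase b).val + (B.erase a).val) = A.val + B.val := by
  rw [erase_val, erase_val, ← Multiset.cons_add, Multiset.cons_erase (mem_val.mpr hb),
    ← Multiset.add_cons, Multiset.cons_erase (mem_val.mpr ha)]

end Multiset

variable {V : Type*} [DecidableEq V]

def edgeDegree (M : Finset (Sym2 V)) (v : V) : ℕ := #{e ∈ M | v ∈ e}

def IsMatching (M : Finset (Sym2 V)) : Prop :=
  (∀ e ∈ M, ¬ e.IsDiag) ∧ ∀ v, M.edgeDegree v ≤ 1

def coveredVerts (M : Finset (Sym2 V)) : Finset V := M.biUnion Sym2.toFinset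

variable {M A B C D : Finset (Sym2 V)} {e f : Sym2 V} {v : V}

theorem edgeDegree_eq_zero_iff : M.edgeDegree v = 0 ↔ ∀ e ∈ M, v ∉ e := by
  simp [edgeDegree, filter_eq_empty_iff]

theorem mem_coveredVerts : v ∈ M.coveredVerts ↔ ∃ e ∈ M, v ∈ e := by
  simp [coveredVerts]

theorem notMem_coveredVerts_iff : v ∉ M.coveredVerts ↔ M.edgeDegree v = 0 := by
  simp [mem_coveredVerts, edgeDegree_eq_zero_iff]

theorem edgeDegree_insert (he : e ∉ M) (v : V) :
    (insert e M).edgeDegree v = M.edgeDegree v + if v ∈ e then 1 else 0 := by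
  unfold edgeDegree
  rw [filter_insert]
  split_ifs with hv
  · exact card_insert_of_notMem fun h => he (mem_filter.mp h).1
  · rfl

theorem edgeDegree_add_edgeDegree (h : C.val + D.val = A.val + B.val) (v : V) :
    C.edgeDegree v + D.edgeDegree v = A.edgeDegree v + B.edgeDegree v := by
  simp only [edgeDegree, card_def, filter_val, ← Multiset.card_add, ← Multiset.filter_add, h]

theorem edgeDegree_mono (h : A ⊆ M) (v : V) : A.edgeDegree v ≤ M.edgeDegree v :=
  card_le_card (filter_subset_filter _ h)

theorem notMem_of_forall_edgeDegree_eq_zero (hfree : ∀ v ∈ e, M.edgeDegree v = 0) : e ∉ M :=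
  fun he => edgeDegree_eq_zero_iff.mp (hfree _ e.out_fst_mem) e he e.out_fst_mem

theorem pairwise_disjoint_iff_forall_edgeDegree_le_one :
    (M : Set (Sym2 V)).Pairwise (fun e f => ∀ v : V, v ∈ e → v ∉ f) ↔
      ∀ v, M.edgeDegree v ≤ 1 := by
  refine ⟨fun h v => card_le_one.mpr fun e he f hf => ?_, fun h e he f hf hef v hve hvf => ?_⟩
  · rw [mem_filter] at he hf
    by_contra hef
    exact h he.1 hf.1 hef v he.2 hf.2
  · exact hef (card_le_one.mp (h v) e (mem_filter.mpr ⟨he, hve⟩) f (mem_filter.mpr ⟨hf, hvf⟩))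

namespace IsMatching

theorem eq_of_mem_of_mem (hM : M.IsMatching) (he : e ∈ M) (hf : f ∈ M) (hve : v ∈ e)
    (hvf : v ∈ f) : e = f :=
  card_le_one.mp (hM.2 v) e (mem_filter.mpr ⟨he, hve⟩) f (mem_filter.mpr ⟨hf, hvf⟩)

theorem mono (hM : M.IsMatching) (hA : A ⊆ M) : A.IsMatching :=
  ⟨fun e he => hM.1 e (hA he), fun v => (edgeDegree_mono hA v).trans (hM.2 v)⟩

theorem insert_of_forall_edgeDegree_eq_zero (hM : M.IsMatching) (he : ¬ e.IsDiag)
    (hfree : ∀ v ∈ e, M.edgeDegree v = 0) : (insert e M).IsMatching := by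
  refine ⟨by simpa [forall_eq_or_imp] using ⟨he, hM.1⟩, fun v => ?_⟩
  rw [edgeDegree_insert (notMem_of_forall_edgeDegree_eq_zero hfree)]
  split_ifs with hv
  · simp [hfree v hv]
  · exact hM.2 v

theorem edgeDegree_erase (hM : M.IsMatching) (he : e ∈ M) (hv : v ∈ e) :
    (M.erase e).edgeDegree v = 0 := by
  have h := hM.2 v
  unfold edgeDegree at h ⊢
  rw [filter_erase, card_erase_of_mem (mem_filter.mpr ⟨he, hv⟩)]
  omega

theorem card_coveredVerts (hM : M.IsMatching) : #M.coveredVerts = 2 * #M := by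
  rw [coveredVerts, card_biUnion, sum_congr rfl fun e he => Sym2.card_toFinset_of_not_isDiag e
    (hM.1 e he), sum_const, smul_eq_mul, mul_comm]
  intro e he f hf hef
  exact disjoint_left.mpr fun v hve hvf =>
    hef (hM.eq_of_mem_of_mem he hf (Sym2.mem_toFinset.mp hve) (Sym2.mem_toFinset.mp hvf))

theorem exists_mem_edgeDegree_eq_zero (hA : A.IsMatching) (hB : B.IsMatching)
    (hlt : #A < #B) : ∃ e ∈ B, ∃ v ∈ e, A.edgeDegree v = 0 := by
  have hnot : ¬ B.coveredVerts ⊆ A.coveredVerts := fun hsub => by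
    have := card_le_card hsub
    rw [hA.card_coveredVerts, hB.card_coveredVerts] at this
    omega
  obtain ⟨v, hvB, hvA⟩ := not_subset.mp hnot
  obtain ⟨e, heB, hve⟩ := mem_coveredVerts.mp hvB
  exact ⟨e, heB, v, hve, notMem_coveredVerts_iff.mp hvA⟩

end IsMatching

def IsExchange (A B C D : Finset (Sym2 V)) : Prop :=
  C.IsMatching ∧ D.IsMatching ∧ #C = #A + 1 ∧ #D + 1 = #B ∧ C.val + D.val = A.val + B.val

theorem isExchange_insert_erase (hA : A.IsMatching) (hB : B.IsMatching) (heB : e ∈ B)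
    (hfree : ∀ v ∈ e, A.edgeDegree v = 0) : IsExchange A B (insert e A) (B.erase e) :=
  have heA := notMem_of_forall_edgeDegree_eq_zero hfree
  ⟨hA.insert_of_forall_edgeDegree_eq_zero (hB.1 _ heB) hfree, hB.mono (erase_subset _ _),
    card_insert_of_notMem heA, card_erase_add_one heB, val_insert_add_val_erase heA heB⟩

/-- `ux` goes back to whichever of `C₀`, `D₀` leaves `x` unmatched, and `vu` to the other one;
`v` and `u` are unmatched on both sides. -/
theorem IsExchange.exists_of_erase_erase {C₀ D₀ : Finset (Sym2 V)} {v u x : V}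
    (hA : A.IsMatching) (hB : B.IsMatching) (hvA : A.edgeDegree v = 0) (hfA : s(u, x) ∈ A)
    (heB : s(v, u) ∈ B) (h₀ : IsExchange (A.erase s(u, x)) (B.erase s(v, u)) C₀ D₀) :
    ∃ C D, IsExchange A B C D := by
  obtain ⟨hC₀, hD₀, hC₀card, hD₀card, hCD₀⟩ := h₀
  have hdeg := edgeDegree_add_edgeDegree hCD₀
  have hv₀ : C₀.edgeDegree v = 0 ∧ D₀.edgeDegree v = 0 := by
    have := hdeg v
    have := edgeDegree_mono (erase_subset s(u, x) A) v
    have := hB.edgeDegree_erase heB (Sym2.mem_mk_left v u)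
    omega
  have hu₀ : C₀.edgeDegree u = 0 ∧ D₀.edgeDegree u = 0 := by
    have := hdeg u
    have := hA.edgeDegree_erase hfA (Sym2.mem_mk_left u x)
    have := hB.edgeDegree_erase heB (Sym2.mem_mk_right v u)
    omega
  have hx₀ : C₀.edgeDegree x + D₀.edgeDegree x ≤ 1 := by
    have := hdeg x
    have := hA.edgeDegree_erase hfA (Sym2.mem_mk_right u x)
    have := (edgeDegree_mono (erase_subset s(v, u) B) x).trans (hB.2 x)
    omega
  obtain ⟨a, b, ha, hb, hfreeC, hfreeD, hab⟩ : ∃ a b : Sym2 V, ¬ a.IsDiag ∧ ¬ b.IsDiag ∧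
      (∀ y ∈ a, C₀.edgeDegree y = 0) ∧ (∀ y ∈ b, D₀.edgeDegree y = 0) ∧
      a ::ₘ b ::ₘ (C₀.val + D₀.val) = A.val + B.val := by
    rw [hCD₀, ← cons_cons_val_erase_add_val_erase heB hfA]
    by_cases hx : C₀.edgeDegree x = 0
    · exact ⟨s(u, x), s(v, u), hA.1 _ hfA, hB.1 _ heB, by simp [hu₀, hx], by simp [hu₀, hv₀],
        Multiset.cons_swap _ _ _⟩
    · exact ⟨s(v, u), s(u, x), hB.1 _ heB, hA.1 _ hfA, by simp [hu₀, hv₀],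
        by simp [hu₀]; omega, rfl⟩
  have haC₀ := notMem_of_forall_edgeDegree_eq_zero hfreeC
  have hbD₀ := notMem_of_forall_edgeDegree_eq_zero hfreeD
  refine ⟨insert a C₀, insert b D₀, hC₀.insert_of_forall_edgeDegree_eq_zero ha hfreeC,
    hD₀.insert_of_forall_edgeDegree_eq_zero hb hfreeD, ?_, ?_, by
      rw [val_insert_add_val_insert haC₀ hbD₀, hab]⟩
  · rw [card_insert_of_notMem haC₀, hC₀card, card_erase_add_one hfA]
  · rw [card_insert_of_notMem hbD₀, hD₀card, card_erase_add_one heB]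

theorem IsMatching.exists_isExchange (hA : A.IsMatching) (hB : B.IsMatching) (hlt : #A < #B) :
    ∃ C D, IsExchange A B C D := by
  induction A using Finset.strongInduction generalizing B with
  | _ A ih =>
  obtain ⟨e, heB, v, hve, hvA⟩ := hA.exists_mem_edgeDegree_eq_zero hB hlt
  obtain ⟨u, rfl⟩ := Sym2.mem_iff_exists.mp hve
  by_cases hu : A.edgeDegree u = 0
  · exact ⟨_, _, isExchange_insert_erase hA hB heB (by simp [hvA, hu])⟩
  obtain ⟨_, hfA, huf⟩ : ∃ f ∈ A, u ∈ f := by simpa [edgeDegree_eq_zero_iff] using hu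
  obtain ⟨x, rfl⟩ := Sym2.mem_iff_exists.mp huf
  obtain ⟨C₀, D₀, h₀⟩ :=
    ih (A.erase s(u, x)) (erase_ssubset hfA) (hA.mono (erase_subset _ _))
      (hB.mono (erase_subset _ _)) (B := B.erase s(v, u))
      (by have := card_erase_add_one hfA; have := card_erase_add_one heB; omega)
  exact IsExchange.exists_of_erase_erase hA hB hvA hfA heB h₀

end Finset

section Costs

variable {V : Type*} [DecidableEq V]

theorem isKMatching_iff {k : ℕ} {M : Finset (Sym2 V)} :
    IsKMatching k M ↔ #M = k ∧ M.IsMatching := by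
  rw [IsKMatching, IsMatching, Finset.pairwise_disjoint_iff_forall_edgeDegree_le_one]

theorem exists_isKMatching [Fintype V] {k : ℕ} (hk : 2 * k ≤ Fintype.card V) :
    ∃ M : Finset (Sym2 V), IsKMatching k M := by
  simp only [isKMatching_iff]
  induction k with
  | zero => exact ⟨∅, rfl, by simp, fun v => by simp [edgeDegree]⟩
  | succ k ih =>
    obtain ⟨M, rfl, hM⟩ := ih (by omega)
    have hfree_card : 1 < #(univ \ M.coveredVerts) := by
      rw [card_sdiff_of_subset (subset_univ _), card_univ, hM.card_coveredVerts]
      omega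
    obtain ⟨a, ha, b, hb, hab⟩ := one_lt_card.mp hfree_card
    have hfree : ∀ y ∈ s(a, b), M.edgeDegree y = 0 := by
      simp only [mem_sdiff, mem_univ, true_and, notMem_coveredVerts_iff] at ha hb
      simp [ha, hb]
    exact ⟨insert s(a, b) M, card_insert_of_notMem (notMem_of_forall_edgeDegree_eq_zero hfree),
      hM.insert_of_forall_edgeDegree_eq_zero (by simpa using hab) hfree⟩

def matchingCosts (w : Sym2 V → ℝ) (k : ℕ) : Set ℝ :=
  {c | ∃ M : Finset (Sym2 V), IsKMatching k M ∧ c = ∑ e ∈ M, w e}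

variable [Fintype V] (w : Sym2 V → ℝ) {k : ℕ}

theorem finite_matchingCosts (k : ℕ) : (matchingCosts w k).Finite :=
  (Set.finite_range fun M : Finset (Sym2 V) => ∑ e ∈ M, w e).subset
    (by rintro _ ⟨M, -, rfl⟩; exact ⟨M, rfl⟩)

theorem sInf_matchingCosts_le {M : Finset (Sym2 V)} (hM : IsKMatching k M) :
    sInf (matchingCosts w k) ≤ ∑ e ∈ M, w e :=
  csInf_le (finite_matchingCosts w k).bddBelow ⟨M, hM, rfl⟩

theorem exists_isKMatching_sum_eq_sInf (hk : 2 * k ≤ Fintype.card V) :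
    ∃ M : Finset (Sym2 V), IsKMatching k M ∧ ∑ e ∈ M, w e = sInf (matchingCosts w k) := by
  obtain ⟨M, hM⟩ := exists_isKMatching hk
  obtain ⟨M', hM', h⟩ := Set.Nonempty.csInf_mem
    (⟨_, M, hM, rfl⟩ : (matchingCosts w k).Nonempty) (finite_matchingCosts w k)
  exact ⟨M', hM', h.symm⟩

end Costs

theorem stmt_16_general {V : Type*} [Fintype V] [DecidableEq V] (N : ℕ)
    (hV : Fintype.card V = 2 * N)
    (w : Sym2 V → ℝ)
    (E : ℕ → ℝ)
    (hE : ∀ k, E k = sInf {c : ℝ |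
      ∃ M : Finset (Sym2 V), IsKMatching k M ∧ c = ∑ e ∈ M, w e})
    (n : ℕ) (hn : 1 ≤ n) (hnN : n ≤ N - 1) :
    E n - E (n - 1) ≤ E (n + 1) - E n := by
  obtain ⟨A, hA, hwA⟩ := exists_isKMatching_sum_eq_sInf w (k := n - 1) (by omega)
  obtain ⟨B, hB, hwB⟩ := exists_isKMatching_sum_eq_sInf w (k := n + 1) (by omega)
  rw [isKMatching_iff] at hA hB
  obtain ⟨C, D, hC, hD, hCcard, hDcard, hCD⟩ := hA.2.exists_isExchange hB.2 (by omega)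
  have hwC := sInf_matchingCosts_le w (isKMatching_iff.mpr ⟨(by omega : #C = n), hC⟩)
  have hwD := sInf_matchingCosts_le w (isKMatching_iff.mpr ⟨(by omega : #D = n), hD⟩)
  have hwCD := sum_add_sum_eq_of_val_add_val_eq w hCD
  have hE' : ∀ k, E k = sInf (matchingCosts w k) := hE
  rw [hE', hE', hE']
  linarith

/-- Convexity of the optimal partial-matching cost: on a complete graph with `2N`
vertices and nonnegative edge weights, letting `E k` be the minimum cost of a matching
of `k` disjoint edges, we have `E (n+1) - E n ≥ E n - E (n-1)` for `1 ≤ n ≤ N-1`. -/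
theorem stmt_16 {V : Type*} [Fintype V] [DecidableEq V] (N : ℕ)
    (hV : Fintype.card V = 2 * N)
    (w : Sym2 V → ℝ) (hw : ∀ e, 0 ≤ w e)
    (E : ℕ → ℝ)
    (hE : ∀ k, E k = sInf {c : ℝ |
      ∃ M : Finset (Sym2 V), IsKMatching k M ∧ c = ∑ e ∈ M, w e})
    (n : ℕ) (hn : 1 ≤ n) (hnN : n ≤ N - 1) :
    E n - E (n - 1) ≤ E (n + 1) - E n :=
  stmt_16_general N hV w E hE n hn hnN
end
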